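/- arXiv:0706.1475 — 2 statements merged into one kernel-verified Lean document; each statement's English description precedes it below -/
import Mathlib

section
/- Let $(A,\phi_0)$ be a Jacobi algebroid and $N$ a Nijenhuis operator on $A$. Then $\phi_1=N^*\phi_0$ is a 1-cocycle of the deformed Lie algebroid $A_N=(A,[\cdot,\cdot]_N,\rho_N=\rho\circ N)$, i.e. $\langle\phi_1,[X,Y]_N\rangle=\rho_N(X)\langle\phi_1,Y\rangle-\rho_N(Y)\langle\phi_1,X\rangle$ for all sections $X,Y$. -/
/-- The bracket deformed by a Nijenhuis operator:
`[X,Y]_N = [NX,Y] + [X,NY] − N[X,Y]`. -/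
def deformedBracket {L : Type*} [AddCommGroup L]
    (b : L → L → L) (N : L → L) (X Y : L) : L :=
  b (N X) Y + b X (N Y) - N (b X Y)

/-- Let `(A, φ₀)` be a Jacobi algebroid and `N` a Nijenhuis
operator on `A`.  Then `φ₁ = N^*φ₀` is a 1-cocycle of the deformed Lie
algebroid `A_N = (A, [·,·]_N, ρ_N = ρ ∘ N)`:
`⟨φ₁,[X,Y]_N⟩ = ρ_N(X)⟨φ₁,Y⟩ − ρ_N(Y)⟨φ₁,X⟩` for all sections `X, Y`. -/
theorem stmt13 {R : Type*} [CommRing R] {L : Type*} [AddCommGroup L] [Module R L]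
    (b : L → L → L) (ρ : L → R → R)
    (hbadd : ∀ X Y Z : L, b X (Y + Z) = b X Y + b X Z)
    (hbskew : ∀ X Y : L, b X Y = -(b Y X))
    (hbjac : ∀ X Y Z : L, b X (b Y Z) = b (b X Y) Z + b Y (b X Z))
    (hbLeib : ∀ (X : L) (f : R) (Y : L), b X (f • Y) = f • b X Y + ρ X f • Y)
    (hρmor : ∀ X Y : L, ∀ f : R, ρ (b X Y) f = ρ X (ρ Y f) - ρ Y (ρ X f))
    -- φ₀ is a 1-cocycle of A
    (φ : L → R)
    (hφcoc : ∀ X Y : L, φ (b X Y) = ρ X (φ Y) - ρ Y (φ X))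
    -- N is a Nijenhuis operator
    (N : L → L)
    (hNadd : ∀ X Y : L, N (X + Y) = N X + N Y)
    (hNsmul : ∀ (f : R) (X : L), N (f • X) = f • N X)
    (hT : ∀ X Y : L, b (N X) (N Y) = N (deformedBracket b N X Y)) :
    -- φ₁ := φ₀ ∘ N is a 1-cocycle of A_N
    ∀ X Y : L,
      φ (N (deformedBracket b N X Y))
        = ρ (N X) (φ (N Y)) - ρ (N Y) (φ (N X)) := by
  intro X Y
  rw [← hT, hφcoc]
end

section
/- Let $(A,\phi_0,P,N)$ be a Jacobi-Nijenhuis algebroid. Then for all $i,j\in\mathbb{N}$, the bivectors $N^iP$ and $N^jP$ are compatible Jacobi bivectors: $[N^iP,N^jP]^{\phi_0}=0$. -/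
namespace JacobiNijenhuis

variable {R : Type*} [CommRing R] {L : Type*} [AddCommGroup L] [Module R L]

/-- 1-forms on a Lie algebroid (sections `L`, functions `R`), as plain maps
`L → R` together with an `R`-linearity predicate. -/
def IsOneForm (α : L → R) : Prop :=
  (∀ X Y : L, α (X + Y) = α X + α Y) ∧ (∀ (f : R) (X : L), α (f • X) = f * α X)

variable (ρ : L → R → R) (b : L → L → L) (φ : L → R)

/-- The `φ₀`-differential of a function: `d^{φ₀} f = df + f φ₀`. -/
def dphiF (f : R) : L → R := fun X => ρ X f + f * φ X

/-- The `φ₀`-differential of a 1-form, as a 2-form. -/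
def dphi1 (β : L → R) : L → L → R := fun X Y =>
  ρ X (β Y) - ρ Y (β X) - β (b X Y) + φ X * β Y - φ Y * β X

/-- The `φ₀`-Lie derivative of a 1-form: `𝓛^{φ₀}_X β = i_X d^{φ₀}β + d^{φ₀}(i_X β)`. -/
def lphi (X : L) (β : L → R) : L → R := fun Y =>
  dphi1 ρ b φ β X Y + dphiF ρ φ (β X) Y

/-- The bracket induced on `A^*` by a bivector `P` (given by `P♯ = sh`,
`P(α,β) = Pf α β`). -/
def bracketP (sh : (L → R) → L) (Pf : (L → R) → (L → R) → R)
    (α β : L → R) : L → R := fun Y =>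
  lphi ρ b φ (sh α) β Y - lphi ρ b φ (sh β) α Y - dphiF ρ φ (Pf α β) Y

/-- Half of the Schouten–Jacobi square `[P,P]^{φ₀}` of a bivector, evaluated on
three 1-forms: `(1/2)[P,P]^{φ₀}(α,β,γ) = ⟨[P♯α,P♯β] − P♯([α,β]_P), γ⟩`. -/
def sqSJ (sh : (L → R) → L) (Pf : (L → R) → (L → R) → R)
    (α β γ : L → R) : R :=
  γ (b (sh α) (sh β) - sh (bracketP ρ b φ sh Pf α β))

/-- The Schouten–Jacobi bracket `[P,Q]^{φ₀}` of two bivectors, evaluated on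
three 1-forms, obtained from `sqSJ` by polarization:
`[P,Q]^{φ₀} = (1/2)([P+Q,P+Q]^{φ₀} − [P,P]^{φ₀} − [Q,Q]^{φ₀})`. -/
def sjPair (sh₁ : (L → R) → L) (Pf₁ : (L → R) → (L → R) → R)
    (sh₂ : (L → R) → L) (Pf₂ : (L → R) → (L → R) → R)
    (α β γ : L → R) : R :=
  sqSJ ρ b φ (fun δ => sh₁ δ + sh₂ δ) (fun δ ε => Pf₁ δ ε + Pf₂ δ ε) α β γ
    - sqSJ ρ b φ sh₁ Pf₁ α β γ - sqSJ ρ b φ sh₂ Pf₂ α β γ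

set_option linter.unusedSectionVars false
set_option linter.unusedVariables false

/-! ### Auxiliary machinery for the hierarchy theorem -/

/-- Canonical closed formula for the bracket induced by a bivector with
anchor-ish map `sh`, evaluated at a point. -/
def Cw (ρ : L → R → R) (b : L → L → L) (φ : L → R) (sh : (L → R) → L)
    (α β : L → R) (Y : L) : R :=
  ρ (sh α) (β Y) - β (b (sh α) Y) + φ (sh α) * β Y
    - ρ (sh β) (α Y) + α (b (sh β) Y) - φ (sh β) * α Y
    - ρ Y (β (sh α)) - β (sh α) * φ Y

/-- The fundamental "one-sided concomitant" expression. -/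
def DLa (ρ : L → R → R) (b : L → L → L) (φ : L → R) (Nf : L → L)
    (β : L → R) (X Y : L) : R :=
  β (Nf (b X Y)) - β (b X (Nf Y)) + ρ Y (β (Nf X)) - ρ (Nf Y) (β X)
    + β (Nf X) * φ Y - β X * φ (Nf Y)

section Aux

variable {ρ : L → R → R} {b : L → L → L} {φ : L → R} {N : L → L} {sh : (L → R) → L}

theorem oneform_neg {α : L → R} (hα : IsOneForm α) (X : L) : α (-X) = -α X := by
  have h := hα.2 (-1) X
  rw [neg_one_smul] at h
  rw [h]; ring

theorem oneform_sub {α : L → R} (hα : IsOneForm α) (X Y : L) :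
    α (X - Y) = α X - α Y := by
  rw [sub_eq_add_neg, hα.1, oneform_neg hα]; ring

theorem dlrec (ρ : L → R → R) (b : L → L → L) (φ : L → R) (N : L → L)
    (k : ℕ) (β : L → R) (X Y : L) :
    DLa ρ b φ (N^[k+1]) β X Y
      = DLa ρ b φ (N^[k]) (fun Z => β (N Z)) X Y + DLa ρ b φ N β X (N^[k] Y) := by
  simp only [DLa, Function.iterate_succ_apply']
  ring

theorem dlC1 (hNadd : ∀ X Y : L, N (X + Y) = N X + N Y)
    (hNsmul : ∀ (f : R) (X : L), N (f • X) = f • N X)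
    (hT : ∀ X Y : L, b (N X) (N Y) = N (b (N X) Y + b X (N Y) - N (b X Y)))
    {β : L → R} (hβ : IsOneForm β) (X Y : L) :
    DLa ρ b φ N β (N X) Y = DLa ρ b φ N (fun Z => β (N Z)) X Y := by
  have hNneg : ∀ U : L, N (-U) = -N U := fun U => by
    rw [← neg_one_smul R U, hNsmul, neg_one_smul]
  have hNsub : ∀ U V : L, N (U - V) = N U - N V := fun U V => by
    rw [sub_eq_add_neg, hNadd, hNneg, sub_eq_add_neg]
  simp only [DLa, hT X Y, hNsub, hNadd, hβ.1, oneform_sub hβ]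
  ring

theorem dlCk (hNadd : ∀ X Y : L, N (X + Y) = N X + N Y)
    (hNsmul : ∀ (f : R) (X : L), N (f • X) = f • N X)
    (hT : ∀ X Y : L, b (N X) (N Y) = N (b (N X) Y + b X (N Y) - N (b X Y))) :
    ∀ (k : ℕ) {β : L → R}, IsOneForm β → ∀ (X Y : L),
      DLa ρ b φ (N^[k]) β (N X) Y = DLa ρ b φ (N^[k]) (fun Z => β (N Z)) X Y := by
  intro k
  induction k with
  | zero =>
    intro β hβ X Y
    simp only [DLa, Function.iterate_zero_apply]
    ring
  | succ k IH =>
    intro β hβ X Y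
    have hβN : IsOneForm (fun Z => β (N Z)) :=
      ⟨fun U V => by simp only [hNadd, hβ.1], fun f U => by simp only [hNsmul, hβ.2]⟩
    have h1 := dlrec ρ b φ N k β (N X) Y
    have h2 := dlrec ρ b φ N k (fun Z => β (N Z)) X Y
    have h3 := IH hβN X Y
    have h4 := dlC1 (ρ := ρ) (φ := φ) hNadd hNsmul hT hβ X (N^[k] Y)
    linear_combination h1 - h2 + h3 + h4

theorem dkP (hNadd : ∀ X Y : L, N (X + Y) = N X + N Y)
    (hNsmul : ∀ (f : R) (X : L), N (f • X) = f • N X)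
    (hT : ∀ X Y : L, b (N X) (N Y) = N (b (N X) Y + b X (N Y) - N (b X Y)))
    (hNP : ∀ α : L → R, N (sh α) = sh (fun X => α (N X)))
    (hDelta : ∀ (α β : L → R), IsOneForm α → IsOneForm β → ∀ Y : L,
      DLa ρ b φ N β (sh α) Y - DLa ρ b φ N α (sh β) Y
        = ρ Y (β (N (sh α))) + β (N (sh α)) * φ Y
          - ρ (N Y) (β (sh α)) - β (sh α) * φ (N Y)) :
    ∀ (k : ℕ) (α β : L → R), IsOneForm α → IsOneForm β → ∀ Y : L,
      DLa ρ b φ (N^[k]) β (sh α) Y - DLa ρ b φ (N^[k]) α (sh β) Y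
        = ρ Y (β (N^[k] (sh α))) + β (N^[k] (sh α)) * φ Y
          - ρ (N^[k] Y) (β (sh α)) - β (sh α) * φ (N^[k] Y) := by
  intro k
  induction k with
  | zero =>
    intro α β hα hβ Y
    simp only [DLa, Function.iterate_zero_apply]
    ring
  | succ k IH =>
    intro α β hα hβ Y
    have hβN : IsOneForm (fun X => β (N X)) :=
      ⟨fun U V => by simp only [hNadd, hβ.1], fun f U => by simp only [hNsmul, hβ.2]⟩
    have h1 := dlrec ρ b φ N k β (sh α) Y
    have h2 := dlrec ρ b φ N k α (sh β) Y
    have h3 := IH α (fun X => β (N X)) hα hβN Y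
    rw [← hNP β] at h3
    have h4 := dlCk (ρ := ρ) (φ := φ) hNadd hNsmul hT k hα (sh β) Y
    have h5 := hDelta α β hα hβ (N^[k] Y)
    simp only [Function.iterate_succ_apply']
    linear_combination h1 - h2 + h3 + h4 + h5

theorem tmLem (hNadd : ∀ X Y : L, N (X + Y) = N X + N Y)
    (hNsmul : ∀ (f : R) (X : L), N (f • X) = f • N X)
    (hT : ∀ X Y : L, b (N X) (N Y) = N (b (N X) Y + b X (N Y) - N (b X Y)))
    (hNP : ∀ α : L → R, N (sh α) = sh (fun X => α (N X)))
    (hsh' : ∀ κ μ : L → R, μ (sh κ) = -(κ (sh μ)))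
    (hρneg : ∀ (X : L) (u : R), ρ X (-u) = -ρ X u)
    (hDelta : ∀ (α β : L → R), IsOneForm α → IsOneForm β → ∀ Y : L,
      DLa ρ b φ N β (sh α) Y - DLa ρ b φ N α (sh β) Y
        = ρ Y (β (N (sh α))) + β (N (sh α)) * φ Y
          - ρ (N Y) (β (sh α)) - β (sh α) * φ (N Y))
    (α β : L → R) (hα : IsOneForm α) (hβ : IsOneForm β) (Y : L) :
    Cw ρ b φ sh (fun X => α (N X)) (fun X => β (N X)) Y
      = Cw ρ b φ sh (fun X => α (N X)) β (N Y)
        + Cw ρ b φ sh α (fun X => β (N X)) (N Y)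
        - Cw ρ b φ sh α β (N (N Y)) := by
  have hNneg : ∀ U : L, N (-U) = -N U := fun U => by
    rw [← neg_one_smul R U, hNsmul, neg_one_smul]
  have hNsub : ∀ U V : L, N (U - V) = N U - N V := fun U V => by
    rw [sub_eq_add_neg, hNadd, hNneg, sub_eq_add_neg]
  have hβN : IsOneForm (fun X => β (N X)) :=
    ⟨fun U V => by simp only [hNadd, hβ.1], fun f U => by simp only [hNsmul, hβ.2]⟩
  have p0 : α (sh β) = -β (sh α) := hsh' β α
  have p1 : α (N (sh β)) = -β (N (sh α)) := by
    rw [hNP β, hsh' (fun X => β (N X)) α]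
  have p2 : α (N (N (sh β))) = -β (N (N (sh α))) := by
    rw [hNP β, hNP (fun X => β (N X)), hsh' _ α]
  have h1 := hDelta α β hα hβ (N Y)
  have h2 := hDelta α (fun X => β (N X)) hα hβN Y
  rw [← hNP β] at h2
  simp only [DLa] at h1 h2
  simp only [Cw]
  simp only [← hNP]
  simp only [hT (sh α) Y, hT (sh β) Y, hNsub, hNadd, hα.1, hβ.1,
    oneform_sub hα, oneform_sub hβ] at h1 h2 ⊢
  simp only [p0, p1, p2, hρneg] at h1 h2 ⊢
  linear_combination h1 - h2

theorem cwkLem (hNadd : ∀ X Y : L, N (X + Y) = N X + N Y)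
    (hNsmul : ∀ (f : R) (X : L), N (f • X) = f • N X)
    (hT : ∀ X Y : L, b (N X) (N Y) = N (b (N X) Y + b X (N Y) - N (b X Y)))
    (hNP : ∀ α : L → R, N (sh α) = sh (fun X => α (N X)))
    (hNPk : ∀ (m : ℕ) (δ : L → R), N^[m] (sh δ) = sh (fun X => δ (N^[m] X)))
    (hsh' : ∀ κ μ : L → R, μ (sh κ) = -(κ (sh μ)))
    (hρneg : ∀ (X : L) (u : R), ρ X (-u) = -ρ X u)
    (hDelta : ∀ (α β : L → R), IsOneForm α → IsOneForm β → ∀ Y : L,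
      DLa ρ b φ N β (sh α) Y - DLa ρ b φ N α (sh β) Y
        = ρ Y (β (N (sh α))) + β (N (sh α)) * φ Y
          - ρ (N Y) (β (sh α)) - β (sh α) * φ (N Y))
    (k : ℕ) (α β : L → R) (hα : IsOneForm α) (hβ : IsOneForm β) (Z : L) :
    Cw ρ b φ (fun δ => N^[k] (sh δ)) α β Z
      = Cw ρ b φ sh (fun X => α (N^[k] X)) β Z
        + Cw ρ b φ sh α (fun X => β (N^[k] X)) Z
        - Cw ρ b φ sh α β (N^[k] Z) := by
  have hD := dkP hNadd hNsmul hT hNP hDelta k α β hα hβ Z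
  have p0 : α (sh β) = -β (sh α) := hsh' β α
  have pk : α (N^[k] (sh β)) = -β (N^[k] (sh α)) := by
    rw [hNPk k β, hsh' (fun X => β (N^[k] X)) α]
  simp only [DLa] at hD
  simp only [Cw]
  rw [← hNPk k α, ← hNPk k β]
  simp only [pk, p0, hρneg] at hD ⊢
  linear_combination hD

theorem shift2 {f : ℕ → ℕ → ℕ → R}
    (hrec : ∀ p q r, f (p+1) (q+1) r = f (p+1) q (r+1) + f p (q+1) (r+1) - f p q (r+2)) :
    ∀ p q r, f p (q+1) r - f p q (r+1) = f 0 (q+1) (r+p) - f 0 q (r+p+1) := by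
  intro p
  induction p with
  | zero => intro q r; norm_num
  | succ p IH =>
    intro q r
    have h := hrec p q r
    have h2 := IH q (r+1)
    have e1 : r + 1 + p = r + (p+1) := by omega
    rw [e1] at h2
    linear_combination h + h2

theorem teleL1 {f : ℕ → ℕ → ℕ → R}
    (hrec : ∀ p q r, f (p+1) (q+1) r = f (p+1) q (r+1) + f p (q+1) (r+1) - f p q (r+2)) :
    ∀ q p r, f p q r - f p 0 (r+q) = f 0 q (r+p) - f 0 0 (r+p+q) := by
  intro q
  induction q with
  | zero => intro p r; norm_num
  | succ q IH =>
    intro p r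
    have h1 := shift2 hrec p q r
    have h2 := IH p (r+1)
    have e1 : r + 1 + q = r + (q+1) := by omega
    have e2 : r + 1 + p = r + p + 1 := by omega
    rw [e1, e2] at h2
    have e3 : r + p + 1 + q = r + p + (q+1) := by omega
    rw [e3] at h2
    linear_combination h1 + h2

end Aux

/-- Let `(A, φ₀, P, N)` be a Jacobi–Nijenhuis algebroid:
`P` a Jacobi bivector, `N` a Nijenhuis operator, compatible in the sense that
`N ∘ P♯ = P♯ ∘ N^*` and the concomitant `C(P,N)` vanishes, i.e. the bracket
`[·,·]_{NP}` induced on `A^*` from `(A,φ₀)` by `NP` equals the bracket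
`[·,·]_P^N` induced from `(A_N, φ₁ = N^*φ₀)` by `P`.  Then for all
`i, j ∈ ℕ` the bivectors `N^iP` and `N^jP` are compatible Jacobi bivectors:
`[N^iP, N^jP]^{φ₀} = 0`. -/
theorem stmt14
    -- Lie algebroid structure on A
    (hbadd : ∀ X Y Z : L, b X (Y + Z) = b X Y + b X Z)
    (hbskew : ∀ X Y : L, b X Y = -(b Y X))
    (hbjac : ∀ X Y Z : L, b X (b Y Z) = b (b X Y) Z + b Y (b X Z))
    (hbLeib : ∀ (X : L) (f : R) (Y : L), b X (f • Y) = f • b X Y + ρ X f • Y)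
    (hρadd : ∀ X : L, ∀ f g : R, ρ X (f + g) = ρ X f + ρ X g)
    (hρder : ∀ X : L, ∀ f g : R, ρ X (f * g) = ρ X f * g + f * ρ X g)
    (hρmor : ∀ X Y : L, ∀ f : R, ρ (b X Y) f = ρ X (ρ Y f) - ρ Y (ρ X f))
    (hρlinX : ∀ (f : R) (X : L) (g : R), ρ (f • X) g = f * ρ X g)
    (hρaddX : ∀ X Y : L, ∀ f : R, ρ (X + Y) f = ρ X f + ρ Y f)
    -- the 1-cocycle φ₀
    (hφform : IsOneForm φ)
    (hφcoc : ∀ X Y : L, φ (b X Y) = ρ X (φ Y) - ρ Y (φ X))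
    -- the bivector P (via P♯ = sh and the pairing Pf)
    (sh : (L → R) → L) (Pf : (L → R) → (L → R) → R)
    (hPskew : ∀ α β : L → R, Pf α β = -(Pf β α))
    (hsh : ∀ α β : L → R, β (sh α) = Pf α β)
    (hshadd : ∀ α β : L → R, sh (α + β) = sh α + sh β)
    (hshsmul : ∀ (f : R) (α : L → R), sh (fun Y => f * α Y) = f • sh α)
    -- P is a Jacobi bivector: [P,P]^{φ₀} = 0
    (hPP : ∀ α β γ : L → R, IsOneForm α → IsOneForm β → IsOneForm γ →
      sqSJ ρ b φ sh Pf α β γ = 0)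
    -- the Nijenhuis operator N
    (N : L → L)
    (hNadd : ∀ X Y : L, N (X + Y) = N X + N Y)
    (hNsmul : ∀ (f : R) (X : L), N (f • X) = f • N X)
    (hT : ∀ X Y : L,
      b (N X) (N Y) = N (b (N X) Y + b X (N Y) - N (b X Y)))
    -- compatibility (1): N P♯ = P♯ N^*
    (hNP : ∀ α : L → R, N (sh α) = sh (fun X => α (N X)))
    -- compatibility (2): vanishing of the concomitant C(P,N), i.e. the bracket
    -- [·,·]_{NP} induced from (A,φ₀) by NP coincides with the bracket
    -- [·,·]_P^N induced from (A_N, φ₁ = N^*φ₀) by P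
    (hC : ∀ α β : L → R, IsOneForm α → IsOneForm β →
      bracketP ρ b φ (fun δ => N (sh δ)) (fun δ ε => ε (N (sh δ))) α β
        = bracketP (fun X => ρ (N X))
            (fun X Y => b (N X) Y + b X (N Y) - N (b X Y))
            (fun X => φ (N X)) sh Pf α β) :
    ∀ i j : ℕ, ∀ α β γ : L → R, IsOneForm α → IsOneForm β → IsOneForm γ →
      sjPair ρ b φ
        (fun δ => N^[i] (sh δ)) (fun δ ε => ε (N^[i] (sh δ)))
        (fun δ => N^[j] (sh δ)) (fun δ ε => ε (N^[j] (sh δ))) α β γ = 0 := by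
  -- basic derived facts
  have hρzero : ∀ X : L, ρ X 0 = 0 := fun X => by
    have h := hρadd X 0 0
    rw [add_zero] at h
    linear_combination -h
  have hρneg : ∀ (X : L) (u : R), ρ X (-u) = -ρ X u := fun X u => by
    have h := hρadd X u (-u)
    rw [add_neg_cancel, hρzero] at h
    linear_combination -h
  have hsh' : ∀ κ μ : L → R, μ (sh κ) = -κ (sh μ) := fun κ μ => by
    rw [hsh κ μ, hPskew κ μ, ← hsh μ κ]
  have hNkadd : ∀ (k : ℕ) (X Y : L), N^[k] (X + Y) = N^[k] X + N^[k] Y := by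
    intro k
    induction k with
    | zero => intro X Y; simp
    | succ k IH => intro X Y; simp only [Function.iterate_succ_apply', IH, hNadd]
  have hNksmul : ∀ (k : ℕ) (f : R) (X : L), N^[k] (f • X) = f • N^[k] X := by
    intro k
    induction k with
    | zero => intro f X; simp
    | succ k IH => intro f X; simp only [Function.iterate_succ_apply', IH, hNsmul]
  have hofk : ∀ (k : ℕ) (δ : L → R), IsOneForm δ → IsOneForm (fun X => δ (N^[k] X)) :=
    fun k δ hδ => ⟨fun X Y => by simp only [hNkadd, hδ.1],
      fun f X => by simp only [hNksmul, hδ.2]⟩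
  have hNPk : ∀ (m : ℕ) (δ : L → R), N^[m] (sh δ) = sh (fun X => δ (N^[m] X)) := by
    intro m
    induction m with
    | zero => intro δ; simp
    | succ m IH =>
      intro δ
      rw [Function.iterate_succ_apply', IH δ, hNP]
      exact congrArg sh (funext fun X => by
        show δ (N^[m] (N X)) = δ (N^[m+1] X)
        rw [Function.iterate_succ_apply])
  have hbaddL : ∀ X X' Y : L, b (X + X') Y = b X Y + b X' Y := by
    intro X X' Y
    rw [hbskew (X + X') Y, hbadd Y X X', hbskew Y X, hbskew Y X']
    abel
  -- the concomitant identity (Δ = 0), derived from hC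
  have hDelta : ∀ (α β : L → R), IsOneForm α → IsOneForm β → ∀ Y : L,
      DLa ρ b φ N β (sh α) Y - DLa ρ b φ N α (sh β) Y
        = ρ Y (β (N (sh α))) + β (N (sh α)) * φ Y
          - ρ (N Y) (β (sh α)) - β (sh α) * φ (N Y) := by
    intro α β hα hβ Y
    have h := congrFun (hC α β hα hβ) Y
    simp only [bracketP, lphi, dphi1, dphiF, oneform_sub hβ, hβ.1,
      oneform_sub hα, hα.1, ← hsh] at h
    have p0 : α (sh β) = -β (sh α) := hsh' β α
    have p1 : α (N (sh β)) = -β (N (sh α)) := by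
      rw [hNP β, hsh' (fun X => β (N X)) α]
    simp only [DLa, p0, p1, hρneg]
    linear_combination -h
  -- weak morphism property of P♯ (from [P,P] = 0)
  have hPPw : ∀ (δ ε ζ : L → R), IsOneForm δ → IsOneForm ε → IsOneForm ζ →
      ζ (b (sh δ) (sh ε)) = -Cw ρ b φ sh δ ε (sh ζ) := by
    intro δ ε ζ hδ hε hζ
    have h := hPP δ ε ζ hδ hε hζ
    simp only [sqSJ, oneform_sub hζ] at h
    have h2 := hsh' (bracketP ρ b φ sh Pf δ ε) ζ
    have h3 : bracketP ρ b φ sh Pf δ ε (sh ζ) = Cw ρ b φ sh δ ε (sh ζ) := by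
      simp only [bracketP, lphi, dphi1, dphiF, Cw, ← hsh]; ring
    linear_combination h + h2 - h3
  intro i j α β γ hα hβ hγ
  -- b-evaluation of the k-th bracket
  have cwE : ∀ (k : ℕ) (Z : L),
      bracketP ρ b φ (fun δ => N^[k] (sh δ)) (fun δ ε => ε (N^[k] (sh δ))) α β Z
        = Cw ρ b φ (fun δ => N^[k] (sh δ)) α β Z := by
    intro k Z
    simp only [bracketP, lphi, dphi1, dphiF, Cw]; ring
  have key1 : ∀ k l : ℕ, γ (b (N^[k] (sh α)) (N^[l] (sh β)))
      = -Cw ρ b φ sh (fun X => α (N^[k] X)) (fun X => β (N^[l] X)) (sh γ) := by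
    intro k l
    rw [hNPk k α, hNPk l β]
    exact hPPw _ _ γ (hofk k α hα) (hofk l β hβ) hγ
  have key2 : ∀ k l : ℕ,
      γ (N^[k] (sh (bracketP ρ b φ (fun δ => N^[l] (sh δ))
          (fun δ ε => ε (N^[l] (sh δ))) α β)))
        = -Cw ρ b φ sh (fun X => α (N^[l] X)) β (N^[k] (sh γ))
          - Cw ρ b φ sh α (fun X => β (N^[l] X)) (N^[k] (sh γ))
          + Cw ρ b φ sh α β (N^[l + k] (sh γ)) := by
    intro k l
    have h1 := hsh' (bracketP ρ b φ (fun δ => N^[l] (sh δ))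
      (fun δ ε => ε (N^[l] (sh δ))) α β) (fun X => γ (N^[k] X))
    rw [← hNPk k γ] at h1
    have h2 := cwE l (N^[k] (sh γ))
    have h3 := cwkLem hNadd hNsmul hT hNP hNPk hsh' hρneg hDelta l α β hα hβ (N^[k] (sh γ))
    have h4 : N^[l] (N^[k] (sh γ)) = N^[l+k] (sh γ) :=
      (Function.iterate_add_apply N l k (sh γ)).symm
    rw [h4] at h3
    linear_combination h1 - h2 - h3
  -- the recursion for the master quantities
  have hrec : ∀ p q r : ℕ,
      Cw ρ b φ sh (fun X => α (N^[p+1] X)) (fun X => β (N^[q+1] X)) (N^[r] (sh γ))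
        = Cw ρ b φ sh (fun X => α (N^[p+1] X)) (fun X => β (N^[q] X)) (N^[r+1] (sh γ))
          + Cw ρ b φ sh (fun X => α (N^[p] X)) (fun X => β (N^[q+1] X)) (N^[r+1] (sh γ))
          - Cw ρ b φ sh (fun X => α (N^[p] X)) (fun X => β (N^[q] X)) (N^[r+2] (sh γ)) := by
    intro p q r
    have h := tmLem hNadd hNsmul hT hNP hsh' hρneg hDelta
      (fun X => α (N^[p] X)) (fun X => β (N^[q] X))
      (hofk p α hα) (hofk q β hβ) (N^[r] (sh γ))
    have ea : (fun X => (fun X => α (N^[p] X)) (N X)) = (fun X => α (N^[p+1] X)) :=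
      funext fun X => by
        show α (N^[p] (N X)) = α (N^[p+1] X)
        rw [Function.iterate_succ_apply]
    have eb : (fun X => (fun X => β (N^[q] X)) (N X)) = (fun X => β (N^[q+1] X)) :=
      funext fun X => by
        show β (N^[q] (N X)) = β (N^[q+1] X)
        rw [Function.iterate_succ_apply]
    have er1 : N (N^[r] (sh γ)) = N^[r+1] (sh γ) :=
      (Function.iterate_succ_apply' N r (sh γ)).symm
    rw [er1] at h
    have er2 : N (N^[r+1] (sh γ)) = N^[r+2] (sh γ) :=
      (Function.iterate_succ_apply' N (r+1) (sh γ)).symm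
    rw [er2] at h
    rw [ea, eb] at h
    exact h
  have A1 := teleL1 (f := fun p q r =>
    Cw ρ b φ sh (fun X => α (N^[p] X)) (fun X => β (N^[q] X)) (N^[r] (sh γ))) hrec j i 0
  have A2 := teleL1 (f := fun p q r =>
    Cw ρ b φ sh (fun X => α (N^[p] X)) (fun X => β (N^[q] X)) (N^[r] (sh γ))) hrec i j 0
  simp only [Nat.zero_add] at A1 A2
  have e0a : (fun X => α (N^[0] X)) = α := funext fun X => by
    rw [Function.iterate_zero_apply]
  have e0b : (fun X => β (N^[0] X)) = β := funext fun X => by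
    rw [Function.iterate_zero_apply]
  have e0g : N^[0] (sh γ) = sh γ := rfl
  rw [e0a, e0b, e0g] at A1 A2
  rw [Nat.add_comm j i] at A2
  -- split the polarized bracket
  have hBsum : bracketP ρ b φ (fun δ => N^[i] (sh δ) + N^[j] (sh δ))
        (fun δ ε => ε (N^[i] (sh δ)) + ε (N^[j] (sh δ))) α β
      = bracketP ρ b φ (fun δ => N^[i] (sh δ)) (fun δ ε => ε (N^[i] (sh δ))) α β
        + bracketP ρ b φ (fun δ => N^[j] (sh δ)) (fun δ ε => ε (N^[j] (sh δ))) α β := by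
    funext Y
    simp only [Pi.add_apply, bracketP, lphi, dphi1, dphiF, hρaddX, hbaddL, hbadd,
      hα.1, hβ.1, hφform.1, hρadd]
    ring
  simp only [sjPair, sqSJ]
  rw [hBsum, hshadd]
  simp only [hNkadd]
  simp only [hbadd, hbaddL, oneform_sub hγ, hγ.1]
  rw [key1 i i, key1 i j, key1 j i, key1 j j,
    key2 i i, key2 i j, key2 j i, key2 j j]
  rw [Nat.add_comm j i]
  linear_combination -A1 - A2

end JacobiNijenhuis
end
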